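/- Let (πₙ : Sₙ(B) → Sₙ₊₁(B))ₙ be a coherent family of sections, i.e., sections of the restriction maps satisfying πₘ ∘ s* = s'* ∘ πₙ for every map s : {1,…,m} → {1,…,n} of index sets (where s' is s shifted to fix the new first variable). Then the set of formulas p(x/𝔠) = { φ(x, c̄) : φ(x, ȳ) ∈ πₙ(tp(c̄/B)), c̄ ∈ 𝔠ⁿ, n > 0 } is a consistent complete global type invariant over B. -/

import Mathlib

open FirstOrder FirstOrder.Language
open FirstOrder FirstOrder.Language

namespace StoneSpace

variable (L : Language) (M : Type*) [L.Structure M]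

/-- Two `n`-tuples of a structure have the same complete type over a parameter set `B`
iff they satisfy the same formulas with parameters in `B`. -/
def typEq (B : Set M) (n : ℕ) (a b : Fin n → M) : Prop :=
  ∀ φ : L.Formula (Fin n ⊕ ↥B),
    φ.Realize (Sum.elim a Subtype.val) ↔ φ.Realize (Sum.elim b Subtype.val)

def typSetoid (B : Set M) (n : ℕ) : Setoid (Fin n → M) :=
  ⟨typEq L M B n,
    ⟨fun _ _ => Iff.rfl, fun h φ => (h φ).symm, fun h h' φ => (h φ).trans (h' φ)⟩⟩

/-- The Stone space of complete `n`-types over `B` (identified, in a monster model,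
with the set of types of `n`-tuples of the model). -/
def S (B : Set M) (n : ℕ) : Type _ := Quotient (typSetoid L M B n)

/-- The complete type of the tuple `a` over `B`. -/
def tp (B : Set M) {n : ℕ} (a : Fin n → M) : S L M B n :=
  Quotient.mk (typSetoid L M B n) a

/-- The basic (cl)open subset of the type space determined by the formula `φ`;
membership in it expresses `φ ∈ p`. -/
def fmlSet (B : Set M) {n : ℕ} (φ : L.Formula (Fin n ⊕ ↥B)) : Set (S L M B n) :=
  fun p => Quotient.lift (fun a => φ.Realize (Sum.elim a Subtype.val))
    (fun a b (h : typEq L M B n a b) => propext (h φ)) p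

/-- The Stone topology on the space of `n`-types over `B`, generated by the sets `fmlSet φ`. -/
instance (B : Set M) (n : ℕ) : TopologicalSpace (S L M B n) :=
  TopologicalSpace.generateFrom (Set.range (fmlSet L M B (n := n)))

/-- The substitution (coordinate-permutation/projection) map between type spaces
induced by a map `s` of index sets. -/
def subst (B : Set M) {m n : ℕ} (s : Fin m → Fin n) : S L M B n → S L M B m :=
  Quotient.map (fun a => a ∘ s)
    (by
      intro a b h ψ
      have := h (ψ.relabel (Sum.map s id))
      rwa [Formula.realize_relabel, Formula.realize_relabel,
        Sum.elim_comp_map, Sum.elim_comp_map, Function.comp_id] at this)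

variable {L M}

/-- Formulas over `B` in `n + 1` free variables, with the tuple `c` of elements
substituted for the last `n` variables: the result is a formula over `M` in one free
variable, i.e., a candidate member of a global `1`-type. -/
def plug1 (B : Set M) {n : ℕ} (ψ : L.Formula (Fin (n + 1) ⊕ ↥B)) (c : Fin n → M) :
    L.Formula (Fin 1 ⊕ M) :=
  ψ.relabel
    (Sum.elim (Fin.cases (Sum.inl 0) (fun j => Sum.inr (c j))) (fun b => Sum.inr b.val))

/-- Same for formulas in `n + 2` free variables: the first two variables remain free. -/
def plug2 (B : Set M) {n : ℕ} (ψ : L.Formula (Fin (n + 2) ⊕ ↥B)) (c : Fin n → M) :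
    L.Formula (Fin 2 ⊕ M) :=
  ψ.relabel
    (Sum.elim
      (Fin.cases (Sum.inl 0) (Fin.cases (Sum.inl 1) (fun j => Sum.inr (c j))))
      (fun b => Sum.inr b.val))

/-- A complete global `k`-type over the model `M` (of the complete theory `Th(M)`): a
finitely satisfiable and complete set of formulas in `k` free variables with parameters
everywhere in `M`. -/
def IsGlobalType (k : ℕ) (p : Set (L.Formula (Fin k ⊕ M))) : Prop :=
  (∀ fs : Finset (L.Formula (Fin k ⊕ M)), ↑fs ⊆ p →
      ∃ c : Fin k → M, ∀ φ ∈ fs, φ.Realize (Sum.elim c id)) ∧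
    (∀ φ : L.Formula (Fin k ⊕ M), φ ∈ p ↔ φ.not ∉ p)

/-- A global `1`-type is invariant over `B` if membership of `φ(x, cc)` depends only on
the type of the parameter tuple `cc` over `B`. -/
def Invariant1 (B : Set M) (p : Set (L.Formula (Fin 1 ⊕ M))) : Prop :=
  ∀ (n : ℕ) (ψ : L.Formula (Fin (n + 1) ⊕ ↥B)) (c c' : Fin n → M),
    typEq L M B n c c' → (plug1 B ψ c ∈ p ↔ plug1 B ψ c' ∈ p)

/-- `c` realizes the restriction of the global type `p` to `B ∪ (range cc)`. -/
def RealizesRes (B : Set M) (p : Set (L.Formula (Fin 1 ⊕ M))) {n : ℕ}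
    (cc : Fin n → M) (c : M) : Prop :=
  ∀ ψ : L.Formula (Fin (n + 1) ⊕ ↥B),
    plug1 B ψ cc ∈ p → ψ.Realize (Sum.elim (Fin.cons c cc) Subtype.val)

/-- The shift `s[+1]` of an index map, fixing the new first variable. -/
def shift {m n : ℕ} (s : Fin m → Fin n) : Fin (m + 1) → Fin (n + 1) :=
  Fin.cases 0 (fun i => (s i).succ)

variable (L M) in
/-- A family of maps `πₙ : Sₙ(B) → Sₙ₊₁(B)` is coherent if it commutes with all
substitution maps. -/
def Coherent (B : Set M) (π : ∀ n, S L M B n → S L M B (n + 1)) : Prop :=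
  ∀ (m n : ℕ) (s : Fin m → Fin n) (r : S L M B n),
    π m (subst L M B s r) = subst L M B (shift s) (π n r)

variable (L M) in
/-- A family of sections of the projections `Sₙ₊₁(B) → Sₙ(B)` forgetting the first
variable. -/
def IsSectionFamily (B : Set M) (π : ∀ n, S L M B n → S L M B (n + 1)) : Prop :=
  ∀ (n : ℕ) (r : S L M B n), subst L M B Fin.succ (π n r) = r

variable (L M) in
/-- The family `π` corresponds to the global type `p`:
`φ(x, ȳ) ∈ πₙ(tp(cc/B))` iff `φ(x, cc) ∈ p`. -/
def Corresponds (B : Set M) (p : Set (L.Formula (Fin 1 ⊕ M)))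
    (π : ∀ n, S L M B n → S L M B (n + 1)) : Prop :=
  ∀ (n : ℕ) (cc : Fin n → M) (ψ : L.Formula (Fin (n + 1) ⊕ ↥B)),
    π n (tp L M B cc) ∈ fmlSet L M B ψ ↔ plug1 B ψ cc ∈ p

end StoneSpace

/-!
Membership of a formula `ψ(x, c̄)` in `p` does not depend on its presentation: given two
presentations `ψ(x, c̄) = ψ'(x, c̄')`, coherence transports both memberships to the type
`π(tp(c̄'c̄/B))` of the concatenated tuple. Since `π` consists of sections, this type extends
`tp(c̄'c̄/B)`, so it contains every formula `χ(x, c̄'c̄)` true for all `x`, in particular `ψ ↔ ψ'`.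
The same concatenation gives closure under conjunction; members of `p` are realized because
`πₙ(tp(c̄/B))` extends `tp(c̄/B)`; completeness and `B`-invariance are inherited from the types
`πₙ(tp(c̄/B))`.
-/

namespace Fin

variable {α : Type*} {m n : ℕ}

theorem append_comp_castAdd (a : Fin m → α) (b : Fin n → α) : append a b ∘ castAdd n = a :=
  funext (append_left a b)

theorem append_comp_natAdd (a : Fin m → α) (b : Fin n → α) : append a b ∘ natAdd m = b :=
  funext (append_right a b)

end Fin

namespace FirstOrder.Language

variable {L : Language} {α β γ : Type*}

namespace Term

theorem relabel_sumMap_congr [DecidableEq α] {f g : α → β}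
    {k : ℕ} (t : L.Term (α ⊕ Fin k)) (h : ∀ a ∈ t.varFinsetLeft, f a = g a) :
    t.relabel (Sum.map f id) = t.relabel (Sum.map g id) := by
  induction t with
  | var x => rcases x with a | i <;> simp_all [varFinsetLeft]
  | func F ts ih =>
    simp only [relabel, func.injEq, heq_eq_eq, true_and]
    funext i
    exact ih i fun a ha => h a (Finset.mem_biUnion.2 ⟨i, Finset.mem_univ i, ha⟩)

end Term

namespace BoundedFormula

/-- Renames the free variables of a bounded formula. Unlike `relabel`, this leaves the number of
bound variables unchanged, so renamings compose without `castLE`. -/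
def mapFreeVar (f : α → β) {k : ℕ} (φ : L.BoundedFormula α k) : L.BoundedFormula β k :=
  φ.mapTermRel (fun _ t => t.relabel (Sum.map f id)) (fun _ => id) (fun _ => id)

theorem mapFreeVar_mapFreeVar (f : α → β) (g : β → γ) {k : ℕ} (φ : L.BoundedFormula α k) :
    (φ.mapFreeVar f).mapFreeVar g = φ.mapFreeVar (g ∘ f) := by
  simp only [mapFreeVar, mapTermRel_mapTermRel]
  congr! 2 with n t
  simp [Sum.map_comp_map]

theorem mapFreeVar_id {k : ℕ} (φ : L.BoundedFormula α k) : φ.mapFreeVar id = φ := by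
  simp only [mapFreeVar, Sum.map_id_id, Term.relabel_id_eq_id]
  exact mapTermRel_id_id_id φ

theorem mapFreeVar_congr [DecidableEq α] {f g : α → β} {k : ℕ} (φ : L.BoundedFormula α k)
    (h : ∀ a ∈ φ.freeVarFinset, f a = g a) : φ.mapFreeVar f = φ.mapFreeVar g := by
  induction φ with
  | falsum => rfl
  | equal t u =>
    simp only [freeVarFinset, Finset.mem_union] at h
    simp only [mapFreeVar, mapTermRel, Term.relabel_sumMap_congr t fun a ha => h a (.inl ha),
      Term.relabel_sumMap_congr u fun a ha => h a (.inr ha)]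
  | rel R ts =>
    simp only [mapFreeVar, mapTermRel, rel.injEq, heq_eq_eq, true_and]
    funext i
    exact Term.relabel_sumMap_congr (ts i) fun a ha =>
      h a (Finset.mem_biUnion.2 ⟨i, Finset.mem_univ i, ha⟩)
  | imp φ ψ ihφ ihψ =>
    simp only [freeVarFinset, Finset.mem_union] at h
    exact congrArg₂ imp (ihφ fun a ha => h a (.inl ha)) (ihψ fun a ha => h a (.inr ha))
  | all φ ih => exact congrArg all (ih h)

theorem relabelAux_comp_inl (f : α → β) (k : ℕ) :
    relabelAux (Sum.inl ∘ f : α → β ⊕ Fin 0) k =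
      Sum.map id (Fin.castLE (Nat.zero_add k).ge) ∘ Sum.map f id := by
  funext x
  rcases x with a | i
  · rfl
  · simp [relabelAux, Fin.ext_iff]

theorem relabel_comp_inl (f : α → β) {k : ℕ} (φ : L.BoundedFormula α k) :
    φ.relabel (Sum.inl ∘ f) = (φ.mapFreeVar f).castLE (Nat.zero_add k).ge := by
  induction φ with
  | falsum => rfl
  | equal t u =>
    simp only [relabel, mapFreeVar, mapTermRel, castLE, Term.relabel_relabel, relabelAux_comp_inl]
  | rel R ts =>
    simp only [relabel, mapFreeVar, mapTermRel, castLE, rel.injEq, heq_eq_eq, true_and]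
    funext i
    simp [Term.relabel_relabel, relabelAux_comp_inl]
  | imp φ ψ ihφ ihψ => rw [relabel_imp, ihφ, ihψ]; rfl
  | all φ ih => rw [relabel_all, ih]; rfl

end BoundedFormula

namespace Formula

theorem relabel_eq_mapFreeVar (f : α → β) (φ : L.Formula α) :
    φ.relabel f = φ.mapFreeVar f :=
  (BoundedFormula.relabel_comp_inl f φ).trans (BoundedFormula.castLE_rfl _ _)

theorem relabel_relabel (f : α → β) (g : β → γ) (φ : L.Formula α) :
    (φ.relabel f).relabel g = φ.relabel (g ∘ f) := by
  simp only [relabel_eq_mapFreeVar, BoundedFormula.mapFreeVar_mapFreeVar]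

theorem relabel_id (φ : L.Formula α) : φ.relabel id = φ := by
  rw [relabel_eq_mapFreeVar, BoundedFormula.mapFreeVar_id]

theorem relabel_congr [DecidableEq α] {f g : α → β} (φ : L.Formula α)
    (h : ∀ a ∈ φ.freeVarFinset, f a = g a) : φ.relabel f = φ.relabel g := by
  simp only [relabel_eq_mapFreeVar, BoundedFormula.mapFreeVar_congr φ h]

variable {M : Type*} [L.Structure M]

noncomputable def exFirst {N : ℕ} (ψ : L.Formula (Fin (N + 1) ⊕ α)) : L.Formula (Fin N ⊕ α) :=
  (ψ.relabel (Sum.elim (Fin.cases (Sum.inr 0) (Sum.inl ∘ Sum.inl)) (Sum.inl ∘ Sum.inr))).iExs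
    (Fin 1)

theorem realize_exFirst {N : ℕ} (ψ : L.Formula (Fin (N + 1) ⊕ α)) (d : Fin N → M)
    (v : α → M) :
    (exFirst ψ).Realize (Sum.elim d v) ↔ ∃ x, ψ.Realize (Sum.elim (Fin.cons x d) v) := by
  have hval (x : Fin 1 → M) :
      Sum.elim (Sum.elim d v) x ∘
          Sum.elim (Fin.cases (Sum.inr 0) (Sum.inl ∘ Sum.inl)) (Sum.inl ∘ Sum.inr) =
        Sum.elim (Fin.cons (x 0) d) v := by
    funext y
    rcases y with i | a
    · exact Fin.cases rfl (fun _ => rfl) i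
    · rfl
  simp only [exFirst, realize_iExs, realize_relabel, hval]
  exact ⟨fun ⟨x, hx⟩ => ⟨x 0, hx⟩, fun ⟨x, hx⟩ => ⟨fun _ => x, hx⟩⟩

end Formula

end FirstOrder.Language

namespace StoneSpace

section Presentations

variable {L : Language} {M : Type*} {B : Set M}

theorem plug1_not {n : ℕ} (ψ : L.Formula (Fin (n + 1) ⊕ B)) (c : Fin n → M) :
    plug1 B ψ.not c = (plug1 B ψ c).not :=
  rfl

theorem plug1_inf {n : ℕ} (ψ χ : L.Formula (Fin (n + 1) ⊕ B)) (c : Fin n → M) :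
    plug1 B (ψ ⊓ χ) c = plug1 B ψ c ⊓ plug1 B χ c :=
  rfl

theorem plug1_relabel_shift {n N : ℕ} (s : Fin n → Fin N) (ψ : L.Formula (Fin (n + 1) ⊕ B))
    (d : Fin N → M) :
    plug1 B (ψ.relabel (Sum.map (shift s) id)) d = plug1 B ψ (d ∘ s) := by
  rw [plug1, plug1, Formula.relabel_relabel]
  congr 1
  funext y
  rcases y with i | b
  · exact Fin.cases rfl (fun _ => rfl) i
  · rfl

theorem exists_plug1_eq (B : Set M) (φ : L.Formula (Fin 1 ⊕ M)) :
    ∃ (n : ℕ) (c : Fin n → M) (ψ : L.Formula (Fin (n + 1) ⊕ B)), φ = plug1 B ψ c := by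
  classical
  set P := φ.freeVarFinset.toRight
  refine ⟨P.card, fun i => (P.equivFin.symm i).1,
    φ.relabel (Sum.elim (fun _ => Sum.inl 0)
      (fun m => if h : m ∈ P then Sum.inl (P.equivFin ⟨m, h⟩).succ else Sum.inl 0)), ?_⟩
  rw [plug1, Formula.relabel_relabel]
  conv_lhs => rw [← Formula.relabel_id φ]
  refine Formula.relabel_congr φ fun y hy => ?_
  rcases y with i | m
  · simp [Fin.eq_zero i]
  · have hm : m ∈ P := Finset.mem_toRight.2 hy
    simp [hm]

end Presentations

variable {L : Language} {M : Type*} [L.Structure M] {B : Set M}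

theorem tp_surjective {n : ℕ} : Function.Surjective (tp L M B (n := n)) :=
  Quotient.mk_surjective

theorem mem_fmlSet_tp {n : ℕ} (ψ : L.Formula (Fin n ⊕ B)) (a : Fin n → M) :
    tp L M B a ∈ fmlSet L M B ψ ↔ ψ.Realize (Sum.elim a Subtype.val) :=
  Iff.rfl

theorem subst_tp {m n : ℕ} (s : Fin m → Fin n) (a : Fin n → M) :
    subst L M B s (tp L M B a) = tp L M B (a ∘ s) :=
  rfl

theorem subst_mem_fmlSet_iff {m n : ℕ} (s : Fin m → Fin n) (q : S L M B n)
    (ψ : L.Formula (Fin m ⊕ B)) :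
    subst L M B s q ∈ fmlSet L M B ψ ↔ q ∈ fmlSet L M B (ψ.relabel (Sum.map s id)) := by
  obtain ⟨a, rfl⟩ := tp_surjective q
  rw [subst_tp, mem_fmlSet_tp, mem_fmlSet_tp, Formula.realize_relabel, Sum.elim_comp_map,
    Function.comp_id]

theorem mem_fmlSet_not {n : ℕ} (ψ : L.Formula (Fin n ⊕ B)) (q : S L M B n) :
    q ∈ fmlSet L M B ψ.not ↔ q ∉ fmlSet L M B ψ := by
  obtain ⟨a, rfl⟩ := tp_surjective q
  exact Formula.realize_not

theorem mem_fmlSet_inf {n : ℕ} (ψ χ : L.Formula (Fin n ⊕ B)) (q : S L M B n) :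
    q ∈ fmlSet L M B (ψ ⊓ χ) ↔ q ∈ fmlSet L M B ψ ∧ q ∈ fmlSet L M B χ := by
  obtain ⟨a, rfl⟩ := tp_surjective q
  exact Formula.realize_inf

theorem mem_fmlSet_iff {n : ℕ} (ψ χ : L.Formula (Fin n ⊕ B)) (q : S L M B n) :
    q ∈ fmlSet L M B (ψ.iff χ) ↔ (q ∈ fmlSet L M B ψ ↔ q ∈ fmlSet L M B χ) := by
  obtain ⟨a, rfl⟩ := tp_surjective q
  exact Formula.realize_iff

section Extension

variable {N : ℕ} {q : S L M B (N + 1)} {d : Fin N → M}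

theorem exists_realize_cons_of_mem_fmlSet (hq : subst L M B Fin.succ q = tp L M B d)
    {ψ : L.Formula (Fin (N + 1) ⊕ B)} (h : q ∈ fmlSet L M B ψ) :
    ∃ x, ψ.Realize (Sum.elim (Fin.cons x d) Subtype.val) := by
  obtain ⟨a, rfl⟩ := tp_surjective q
  have htail : typEq L M B N (Fin.tail a) d := Quotient.exact hq
  rw [← Formula.realize_exFirst, ← htail, Formula.realize_exFirst]
  exact ⟨a 0, by rwa [Fin.cons_self_tail]⟩

theorem mem_fmlSet_of_forall_realize_cons (hq : subst L M B Fin.succ q = tp L M B d)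
    {ψ : L.Formula (Fin (N + 1) ⊕ B)} (h : ∀ x, ψ.Realize (Sum.elim (Fin.cons x d) Subtype.val)) :
    q ∈ fmlSet L M B ψ := by
  by_contra hψ
  obtain ⟨x, hx⟩ := exists_realize_cons_of_mem_fmlSet hq ((mem_fmlSet_not ψ q).2 hψ)
  exact hx (h x)

end Extension

theorem realize_plug1 {n : ℕ} (ψ : L.Formula (Fin (n + 1) ⊕ B)) (c : Fin n → M) (x : M) :
    (plug1 B ψ c).Realize (Sum.elim (fun _ => x) id) ↔
      ψ.Realize (Sum.elim (Fin.cons x c) Subtype.val) := by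
  rw [plug1, Formula.realize_relabel]
  apply Iff.of_eq
  congr 1
  funext y
  rcases y with i | b
  · exact Fin.cases rfl (fun _ => rfl) i
  · rfl

theorem isGlobalType_of_inf_closed {k : ℕ} {p : Set (L.Formula (Fin k ⊕ M))} (htop : ⊤ ∈ p)
    (hinf : ∀ φ ∈ p, ∀ ψ ∈ p, φ ⊓ ψ ∈ p)
    (hreal : ∀ φ ∈ p, ∃ c : Fin k → M, φ.Realize (Sum.elim c id))
    (hcompl : ∀ φ : L.Formula (Fin k ⊕ M), φ ∈ p ↔ φ.not ∉ p) : IsGlobalType k p := by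
  refine ⟨fun fs hfs => ?_, hcompl⟩
  suffices ∃ Φ ∈ p, ∀ c : Fin k → M, Φ.Realize (Sum.elim c id) →
      ∀ φ ∈ fs, φ.Realize (Sum.elim c id) by
    obtain ⟨Φ, hΦ, hΦfs⟩ := this
    obtain ⟨c, hc⟩ := hreal Φ hΦ
    exact ⟨c, hΦfs c hc⟩
  induction fs using Finset.cons_induction with
  | empty => exact ⟨⊤, htop, fun _ _ _ h => absurd h (Finset.notMem_empty _)⟩
  | cons φ fs _ ih =>
    rw [Finset.coe_cons, Set.insert_subset_iff] at hfs
    obtain ⟨Φ, hΦ, hΦfs⟩ := ih hfs.2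
    refine ⟨φ ⊓ Φ, hinf φ hfs.1 Φ hΦ, fun c hc ψ hψ => ?_⟩
    rw [Formula.realize_inf] at hc
    rcases Finset.mem_cons.1 hψ with rfl | hψ
    exacts [hc.1, hΦfs c hc.2 ψ hψ]

section GlobalType

variable {π : ∀ n, S L M B n → S L M B (n + 1)}

theorem Coherent.mem_fmlSet_comp_iff (hcoh : Coherent L M B π) {n N : ℕ} (s : Fin n → Fin N)
    (d : Fin N → M) (ψ : L.Formula (Fin (n + 1) ⊕ B)) :
    π n (tp L M B (d ∘ s)) ∈ fmlSet L M B ψ ↔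
      π N (tp L M B d) ∈ fmlSet L M B (ψ.relabel (Sum.map (shift s) id)) := by
  rw [← subst_tp, hcoh, subst_mem_fmlSet_iff]

theorem IsSectionFamily.mem_fmlSet_iff_of_plug1_eq (hsec : IsSectionFamily L M B π) {N : ℕ}
    {d : Fin N → M} {ψ χ : L.Formula (Fin (N + 1) ⊕ B)} (h : plug1 B ψ d = plug1 B χ d) :
    π N (tp L M B d) ∈ fmlSet L M B ψ ↔ π N (tp L M B d) ∈ fmlSet L M B χ := by
  refine (mem_fmlSet_iff ψ χ _).1 (mem_fmlSet_of_forall_realize_cons (hsec N _) fun x => ?_)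
  rw [Formula.realize_iff, ← realize_plug1, ← realize_plug1, h]

variable (B π) in
def globalType : Set (L.Formula (Fin 1 ⊕ M)) :=
  {φ | ∃ (n : ℕ) (c : Fin n → M) (ψ : L.Formula (Fin (n + 1) ⊕ B)),
    φ = plug1 B ψ c ∧ π n (tp L M B c) ∈ fmlSet L M B ψ}

theorem corresponds_globalType (hcoh : Coherent L M B π) (hsec : IsSectionFamily L M B π) :
    Corresponds L M B (globalType B π) π := by
  refine fun n c ψ => ⟨fun h => ⟨n, c, ψ, rfl, h⟩, ?_⟩
  rintro ⟨n', c', ψ', heq, h'⟩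
  rw [← Fin.append_comp_natAdd c' c, hcoh.mem_fmlSet_comp_iff]
  rw [← Fin.append_comp_castAdd c' c, hcoh.mem_fmlSet_comp_iff] at h'
  refine (hsec.mem_fmlSet_iff_of_plug1_eq ?_).1 h'
  rw [plug1_relabel_shift, plug1_relabel_shift, Fin.append_comp_castAdd,
    Fin.append_comp_natAdd, heq]

theorem inf_mem_globalType (hcoh : Coherent L M B π) {φ₁ φ₂ : L.Formula (Fin 1 ⊕ M)}
    (h₁ : φ₁ ∈ globalType B π) (h₂ : φ₂ ∈ globalType B π) : φ₁ ⊓ φ₂ ∈ globalType B π := by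
  obtain ⟨n₁, c₁, ψ₁, rfl, hψ₁⟩ := h₁
  obtain ⟨n₂, c₂, ψ₂, rfl, hψ₂⟩ := h₂
  rw [← Fin.append_comp_castAdd c₁ c₂, hcoh.mem_fmlSet_comp_iff] at hψ₁
  rw [← Fin.append_comp_natAdd c₁ c₂, hcoh.mem_fmlSet_comp_iff] at hψ₂
  refine ⟨n₁ + n₂, Fin.append c₁ c₂, ψ₁.relabel (Sum.map (shift (Fin.castAdd n₂)) id) ⊓
    ψ₂.relabel (Sum.map (shift (Fin.natAdd n₁)) id), ?_, (mem_fmlSet_inf _ _ _).2 ⟨hψ₁, hψ₂⟩⟩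
  rw [plug1_inf, plug1_relabel_shift, plug1_relabel_shift, Fin.append_comp_castAdd,
    Fin.append_comp_natAdd]

theorem top_mem_globalType : ⊤ ∈ globalType B π := by
  refine ⟨0, Fin.elim0, ⊤, rfl, ?_⟩
  obtain ⟨a, ha⟩ := tp_surjective (π 0 (tp L M B Fin.elim0))
  rw [← ha]
  exact Formula.realize_top.2 trivial

theorem exists_realize_of_mem_globalType (hsec : IsSectionFamily L M B π)
    {φ : L.Formula (Fin 1 ⊕ M)} (h : φ ∈ globalType B π) :
    ∃ v : Fin 1 → M, φ.Realize (Sum.elim v id) := by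
  obtain ⟨n, c, ψ, rfl, hψ⟩ := h
  obtain ⟨x, hx⟩ := exists_realize_cons_of_mem_fmlSet (hsec n _) hψ
  exact ⟨fun _ => x, (realize_plug1 ψ c x).2 hx⟩

end GlobalType

variable {p : Set (L.Formula (Fin 1 ⊕ M))} {π : ∀ n, S L M B n → S L M B (n + 1)}

theorem Corresponds.mem_iff_not_notMem (h : Corresponds L M B p π) (φ : L.Formula (Fin 1 ⊕ M)) :
    φ ∈ p ↔ φ.not ∉ p := by
  obtain ⟨n, c, ψ, rfl⟩ := exists_plug1_eq B φ
  rw [← h, ← plug1_not, ← h, mem_fmlSet_not, not_not]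

theorem Corresponds.invariant1 (h : Corresponds L M B p π) : Invariant1 B p := by
  intro n ψ c c' hcc'
  rw [← h, ← h, show tp L M B c = tp L M B c' from Quotient.sound hcc']

end StoneSpace

open StoneSpace in
theorem coherent_sections_give_invariant_global_type
    (L : Language) (M : Type*) [L.Structure M] (B : Set M)
    (π : ∀ n, S L M B n → S L M B (n + 1))
    (hcoh : Coherent L M B π) (hsec : IsSectionFamily L M B π) :
    IsGlobalType 1
        {φ : L.Formula (Fin 1 ⊕ M) | ∃ (n : ℕ) (cc : Fin n → M)
          (ψ : L.Formula (Fin (n + 1) ⊕ ↥B)),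
            φ = plug1 B ψ cc ∧ π n (tp L M B cc) ∈ fmlSet L M B ψ} ∧
      Invariant1 B
        {φ : L.Formula (Fin 1 ⊕ M) | ∃ (n : ℕ) (cc : Fin n → M)
          (ψ : L.Formula (Fin (n + 1) ⊕ ↥B)),
            φ = plug1 B ψ cc ∧ π n (tp L M B cc) ∈ fmlSet L M B ψ} := by
  have hp : Corresponds L M B (globalType B π) π := corresponds_globalType hcoh hsec
  exact ⟨isGlobalType_of_inf_closed top_mem_globalType
    (fun _ h₁ _ h₂ => inf_mem_globalType hcoh h₁ h₂)
    (fun _ => exists_realize_of_mem_globalType hsec) hp.mem_iff_not_notMem, hp.invariant1⟩
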